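/- With the notation below, the Lie brackets of horizontal vector fields satisfy [δ_t, δ_θ] = a₆θ̇ ∂̇_t + a₇θ̇ ∂̇_r + (a₈ṫ + a₉ṙ)∂̇_θ and [δ_r, δ_θ] = a₁₀θ̇ ∂̇_t + a₁₁θ̇ ∂̇_r + (a₁₂ṫ + a₁₃ṙ)∂̇_θ, where a₆ = −k₇,t + k₇k₈ − k₁k₇ − k₂k₁₀, a₇ = −k₁₀,t + k₈k₁₀ − k₄k₇ − k₆k₁₀, a₈ = −k₈,t + k₁k₈ + k₄k₉ − k₈², a₉ = −k₉,t + k₂k₈ + k₆k₉ − k₈k₉, a₁₀ = −k₇,r + k₇k₉ − k₂k₇ − k₃k₁₀, a₁₁ = −k₁₀,r + k₉k₁₀ − k₆k₇ − k₅k₁₀, a₁₂ = −k₈,r + k₂k₈ + k₆k₉ − k₈k₉, a₁₃ = −k₉,r + k₃k₈ + k₅k₉ − k₉². -/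

import Mathlib

noncomputable section

abbrev Pt : Type := Fin 8 → ℝ

def hIdx (a : Fin 4) : Fin 8 := ⟨a.val, by omega⟩
def vIdx (a : Fin 4) : Fin 8 := ⟨a.val + 4, by omega⟩

structure ConnData where
  k1 : ℝ × ℝ → ℝ
  k2 : ℝ × ℝ → ℝ
  k3 : ℝ × ℝ → ℝ
  k4 : ℝ × ℝ → ℝ
  k5 : ℝ × ℝ → ℝ
  k6 : ℝ × ℝ → ℝ
  k7 : ℝ × ℝ → ℝ
  k8 : ℝ × ℝ → ℝ
  k9 : ℝ × ℝ → ℝ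
  k10 : ℝ × ℝ → ℝ

def ConnData.Smooth (D : ConnData) : Prop :=
  ContDiff ℝ (⊤ : ℕ∞) D.k1 ∧ ContDiff ℝ (⊤ : ℕ∞) D.k2 ∧ ContDiff ℝ (⊤ : ℕ∞) D.k3 ∧ ContDiff ℝ (⊤ : ℕ∞) D.k4 ∧
  ContDiff ℝ (⊤ : ℕ∞) D.k5 ∧ ContDiff ℝ (⊤ : ℕ∞) D.k6 ∧ ContDiff ℝ (⊤ : ℕ∞) D.k7 ∧ ContDiff ℝ (⊤ : ℕ∞) D.k8 ∧
  ContDiff ℝ (⊤ : ℕ∞) D.k9 ∧ ContDiff ℝ (⊤ : ℕ∞) D.k10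

/-- Christoffel symbols: `Γmat D p c a b` is `Γ^c_{ab}` at the point `p`. -/
def Γmat (D : ConnData) (p : Pt) : Fin 4 → Matrix (Fin 4) (Fin 4) ℝ :=
  let x : ℝ × ℝ := (p 0, p 1)
  let s : ℝ := Real.sin (p 2)
  let co : ℝ := Real.cos (p 2)
  ![!![D.k1 x, D.k2 x, 0, 0;
      D.k2 x, D.k3 x, 0, 0;
      0, 0, D.k7 x, 0;
      0, 0, 0, D.k7 x * s ^ 2],
    !![D.k4 x, D.k6 x, 0, 0;
      D.k6 x, D.k5 x, 0, 0;
      0, 0, D.k10 x, 0;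
      0, 0, 0, D.k10 x * s ^ 2],
    !![0, 0, D.k8 x, 0;
      0, 0, D.k9 x, 0;
      D.k8 x, D.k9 x, 0, 0;
      0, 0, 0, -(s * co)],
    !![0, 0, 0, D.k8 x;
      0, 0, 0, D.k9 x;
      0, 0, 0, co / s;
      D.k8 x, D.k9 x, co / s, 0]]

/-- `N^c_a = Σ_b Γ^c_{ab} ẋ^b`. -/
def Ncoef (D : ConnData) (c a : Fin 4) (p : Pt) : ℝ :=
  ∑ b : Fin 4, Γmat D p c a b * p (vIdx b)

/-- The horizontal vector field `δ_a` evaluated at `p`. -/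
def δvf (D : ConnData) (a : Fin 4) (p : Pt) : Pt :=
  Pi.single (hIdx a) 1 - ∑ c : Fin 4, Pi.single (vIdx c) (Ncoef D c a p)

/-- `δ_a` acting as a derivation on functions. -/
def δd (D : ConnData) (a : Fin 4) (f : Pt → ℝ) (p : Pt) : ℝ :=
  fderiv ℝ f p (δvf D a p)

/-- Vertical partial derivative `∂̇_a`. -/
def vd (a : Fin 4) (f : Pt → ℝ) (p : Pt) : ℝ :=
  fderiv ℝ f p (Pi.single (vIdx a) 1)

/-- Curvature `R^c_{ab} = δ_b(N^c_a) - δ_a(N^c_b)`. -/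
def Rcurv (D : ConnData) (c a b : Fin 4) (p : Pt) : ℝ :=
  δd D b (Ncoef D c a) p - δd D a (Ncoef D c b) p

/-- Connection Ricci tensor `Ric_{bc} = Σ_a ∂̇_b (R^a_{ca})`. -/
def Ric (D : ConnData) (b c : Fin 4) (p : Pt) : ℝ :=
  ∑ a : Fin 4, vd b (Rcurv D a c a) p

/-- Lie bracket of vector fields on `ℝ⁸`. -/
def lie (X Y : Pt → Pt) (p : Pt) : Pt :=
  fderiv ℝ Y p (X p) - fderiv ℝ X p (Y p)

/-- Partial derivative w.r.t. `t`. -/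
def pdt (f : ℝ × ℝ → ℝ) (x : ℝ × ℝ) : ℝ := fderiv ℝ f x (1, 0)
/-- Partial derivative w.r.t. `r`. -/
def pdr (f : ℝ × ℝ → ℝ) (x : ℝ × ℝ) : ℝ := fderiv ℝ f x (0, 1)

def a1 (D : ConnData) (x : ℝ × ℝ) : ℝ :=
  pdr D.k1 x - pdt D.k2 x + D.k3 x * D.k4 x - D.k2 x * D.k6 x
def a2 (D : ConnData) (x : ℝ × ℝ) : ℝ :=
  pdr D.k2 x - pdt D.k3 x + (D.k2 x) ^ 2 + D.k3 x * D.k6 x - D.k1 x * D.k3 x - D.k2 x * D.k5 x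
def a3 (D : ConnData) (x : ℝ × ℝ) : ℝ :=
  pdr D.k4 x - pdt D.k6 x + D.k1 x * D.k6 x + D.k4 x * D.k5 x - D.k2 x * D.k4 x - (D.k6 x) ^ 2
def a4 (D : ConnData) (x : ℝ × ℝ) : ℝ :=
  pdr D.k6 x - pdt D.k5 x + D.k2 x * D.k6 x - D.k3 x * D.k4 x
def a5 (D : ConnData) (x : ℝ × ℝ) : ℝ := pdr D.k8 x - pdt D.k9 x
def a6 (D : ConnData) (x : ℝ × ℝ) : ℝ :=
  -pdt D.k7 x + D.k7 x * D.k8 x - D.k1 x * D.k7 x - D.k2 x * D.k10 x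
def a7 (D : ConnData) (x : ℝ × ℝ) : ℝ :=
  -pdt D.k10 x + D.k8 x * D.k10 x - D.k4 x * D.k7 x - D.k6 x * D.k10 x
def a8 (D : ConnData) (x : ℝ × ℝ) : ℝ :=
  -pdt D.k8 x + D.k1 x * D.k8 x + D.k4 x * D.k9 x - (D.k8 x) ^ 2
def a9 (D : ConnData) (x : ℝ × ℝ) : ℝ :=
  -pdt D.k9 x + D.k2 x * D.k8 x + D.k6 x * D.k9 x - D.k8 x * D.k9 x
def a10 (D : ConnData) (x : ℝ × ℝ) : ℝ :=
  -pdr D.k7 x + D.k7 x * D.k9 x - D.k2 x * D.k7 x - D.k3 x * D.k10 x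
def a11 (D : ConnData) (x : ℝ × ℝ) : ℝ :=
  -pdr D.k10 x + D.k9 x * D.k10 x - D.k6 x * D.k7 x - D.k5 x * D.k10 x
def a12 (D : ConnData) (x : ℝ × ℝ) : ℝ :=
  -pdr D.k8 x + D.k2 x * D.k8 x + D.k6 x * D.k9 x - D.k8 x * D.k9 x
def a13 (D : ConnData) (x : ℝ × ℝ) : ℝ :=
  -pdr D.k9 x + D.k3 x * D.k8 x + D.k5 x * D.k9 x - (D.k9 x) ^ 2
def a14 (D : ConnData) (x : ℝ × ℝ) : ℝ := 1 + D.k7 x * D.k8 x + D.k9 x * D.k10 x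



lemma vIdx0 : vIdx 0 = 4 := rfl
lemma vIdx1 : vIdx 1 = 5 := rfl
lemma vIdx2 : vIdx 2 = 6 := rfl
lemma vIdx3 : vIdx 3 = 7 := rfl
lemma hIdx0 : hIdx 0 = 0 := rfl
lemma hIdx1 : hIdx 1 = 1 := rfl
lemma hIdx2 : hIdx 2 = 2 := rfl

def L01 : Pt →L[ℝ] ℝ × ℝ := (ContinuousLinearMap.proj 0).prod (ContinuousLinearMap.proj 1)

lemma hasF_coord (i : Fin 8) (p : Pt) :
    HasFDerivAt (fun q : Pt => q i) (ContinuousLinearMap.proj i : Pt →L[ℝ] ℝ) p :=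
  (ContinuousLinearMap.proj i : Pt →L[ℝ] ℝ).hasFDerivAt

lemma hasF_k {k : ℝ × ℝ → ℝ} (hk : ContDiff ℝ (⊤ : ℕ∞) k) (p : Pt) :
    HasFDerivAt (fun q : Pt => k (q 0, q 1)) ((fderiv ℝ k (p 0, p 1)).comp L01) p :=
  ((hk.differentiable (by simp)).differentiableAt.hasFDerivAt).comp p L01.hasFDerivAt

lemma eval2 (φ : ℝ × ℝ →L[ℝ] ℝ) (a b : ℝ) : φ (a, b) = a * φ (1, 0) + b * φ (0, 1) := by
  have h : ((a, b) : ℝ × ℝ) = a • ((1 : ℝ), (0 : ℝ)) + b • ((0 : ℝ), (1 : ℝ)) := by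
    simp [Prod.ext_iff]
  rw [h, map_add, map_smul, map_smul, smul_eq_mul, smul_eq_mul]

lemma N00eq (D : ConnData) : Ncoef D 0 0 = fun q : Pt => D.k1 (q 0, q 1) * q 4 + D.k2 (q 0, q 1) * q 5 := by
  funext q
  simp [Ncoef, Γmat, Fin.sum_univ_four, vIdx0, vIdx1, vIdx2, vIdx3]

lemma N10eq (D : ConnData) : Ncoef D 1 0 = fun q : Pt => D.k4 (q 0, q 1) * q 4 + D.k6 (q 0, q 1) * q 5 := by
  funext q
  simp [Ncoef, Γmat, Fin.sum_univ_four, vIdx0, vIdx1, vIdx2, vIdx3]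

lemma N20eq (D : ConnData) : Ncoef D 2 0 = fun q : Pt => D.k8 (q 0, q 1) * q 6 := by
  funext q
  simp [Ncoef, Γmat, Fin.sum_univ_four, vIdx0, vIdx1, vIdx2, vIdx3]

lemma N30eq (D : ConnData) : Ncoef D 3 0 = fun q : Pt => D.k8 (q 0, q 1) * q 7 := by
  funext q
  simp [Ncoef, Γmat, Fin.sum_univ_four, vIdx0, vIdx1, vIdx2, vIdx3]

lemma N01eq (D : ConnData) : Ncoef D 0 1 = fun q : Pt => D.k2 (q 0, q 1) * q 4 + D.k3 (q 0, q 1) * q 5 := by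
  funext q
  simp [Ncoef, Γmat, Fin.sum_univ_four, vIdx0, vIdx1, vIdx2, vIdx3]

lemma N11eq (D : ConnData) : Ncoef D 1 1 = fun q : Pt => D.k6 (q 0, q 1) * q 4 + D.k5 (q 0, q 1) * q 5 := by
  funext q
  simp [Ncoef, Γmat, Fin.sum_univ_four, vIdx0, vIdx1, vIdx2, vIdx3]

lemma N21eq (D : ConnData) : Ncoef D 2 1 = fun q : Pt => D.k9 (q 0, q 1) * q 6 := by
  funext q
  simp [Ncoef, Γmat, Fin.sum_univ_four, vIdx0, vIdx1, vIdx2, vIdx3]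

lemma N31eq (D : ConnData) : Ncoef D 3 1 = fun q : Pt => D.k9 (q 0, q 1) * q 7 := by
  funext q
  simp [Ncoef, Γmat, Fin.sum_univ_four, vIdx0, vIdx1, vIdx2, vIdx3]

lemma N02eq (D : ConnData) : Ncoef D 0 2 = fun q : Pt => D.k7 (q 0, q 1) * q 6 := by
  funext q
  simp [Ncoef, Γmat, Fin.sum_univ_four, vIdx0, vIdx1, vIdx2, vIdx3]

lemma N12eq (D : ConnData) : Ncoef D 1 2 = fun q : Pt => D.k10 (q 0, q 1) * q 6 := by
  funext q
  simp [Ncoef, Γmat, Fin.sum_univ_four, vIdx0, vIdx1, vIdx2, vIdx3]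

lemma N22eq (D : ConnData) : Ncoef D 2 2 = fun q : Pt => D.k8 (q 0, q 1) * q 4 + D.k9 (q 0, q 1) * q 5 := by
  funext q
  simp [Ncoef, Γmat, Fin.sum_univ_four, vIdx0, vIdx1, vIdx2, vIdx3]

lemma N32eq (D : ConnData) : Ncoef D 3 2 = fun q : Pt => Real.cos (q 2) / Real.sin (q 2) * q 7 := by
  funext q
  simp [Ncoef, Γmat, Fin.sum_univ_four, vIdx0, vIdx1, vIdx2, vIdx3]

lemma fd_k_mul {k : ℝ × ℝ → ℝ} (hk : ContDiff ℝ (⊤ : ℕ∞) k) (i : Fin 8) (p v : Pt) :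
    fderiv ℝ (fun q : Pt => k (q 0, q 1) * q i) p v
      = (v 0 * pdt k (p 0, p 1) + v 1 * pdr k (p 0, p 1)) * p i + k (p 0, p 1) * v i := by
  have h : HasFDerivAt (fun q : Pt => k (q 0, q 1) * q i) _ p :=
    (hasF_k hk p).mul (hasF_coord i p)
  rw [h.fderiv]
  simp only [ContinuousLinearMap.add_apply, ContinuousLinearMap.smul_apply,
    ContinuousLinearMap.comp_apply, ContinuousLinearMap.proj_apply, L01,
    ContinuousLinearMap.prod_apply, smul_eq_mul, pdt, pdr]
  rw [eval2]
  ring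

lemma fd_k_mul2 {k k' : ℝ × ℝ → ℝ} (hk : ContDiff ℝ (⊤ : ℕ∞) k) (hk' : ContDiff ℝ (⊤ : ℕ∞) k')
    (i j : Fin 8) (p v : Pt) :
    fderiv ℝ (fun q : Pt => k (q 0, q 1) * q i + k' (q 0, q 1) * q j) p v
      = ((v 0 * pdt k (p 0, p 1) + v 1 * pdr k (p 0, p 1)) * p i + k (p 0, p 1) * v i)
        + ((v 0 * pdt k' (p 0, p 1) + v 1 * pdr k' (p 0, p 1)) * p j + k' (p 0, p 1) * v j) := by
  have h : HasFDerivAt (fun q : Pt => k (q 0, q 1) * q i + k' (q 0, q 1) * q j) _ p :=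
    ((hasF_k hk p).mul (hasF_coord i p)).add ((hasF_k hk' p).mul (hasF_coord j p))
  rw [h.fderiv]
  simp only [ContinuousLinearMap.add_apply, ContinuousLinearMap.smul_apply,
    ContinuousLinearMap.comp_apply, ContinuousLinearMap.proj_apply, L01,
    ContinuousLinearMap.prod_apply, smul_eq_mul, pdt, pdr]
  rw [eval2 (fderiv ℝ k (p 0, p 1)) (v 0) (v 1), eval2 (fderiv ℝ k' (p 0, p 1)) (v 0) (v 1)]
  ring

lemma fd_cot (p v : Pt) (hp : Real.sin (p 2) ≠ 0) (hv : v 2 = 0) :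
    fderiv ℝ (fun q : Pt => Real.cos (q 2) / Real.sin (q 2) * q 7) p v
      = Real.cos (p 2) / Real.sin (p 2) * v 7 := by
  have hdiv : HasDerivAt (fun θ : ℝ => Real.cos θ / Real.sin θ)
      ((-Real.sin (p 2) * Real.sin (p 2) - Real.cos (p 2) * Real.cos (p 2)) / Real.sin (p 2) ^ 2)
      (p 2) := (Real.hasDerivAt_cos (p 2)).div (Real.hasDerivAt_sin (p 2)) hp
  have hc : HasFDerivAt (fun q : Pt => Real.cos (q 2) / Real.sin (q 2))
      (((-Real.sin (p 2) * Real.sin (p 2) - Real.cos (p 2) * Real.cos (p 2)) / Real.sin (p 2) ^ 2)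
        • (ContinuousLinearMap.proj 2 : Pt →L[ℝ] ℝ)) p :=
    by have := hdiv.comp_hasFDerivAt p (hasF_coord 2 p); exact this
  have h : HasFDerivAt (fun q : Pt => Real.cos (q 2) / Real.sin (q 2) * q 7) _ p :=
    hc.mul (hasF_coord 7 p)
  rw [h.fderiv]
  simp [ContinuousLinearMap.add_apply, ContinuousLinearMap.smul_apply,
    ContinuousLinearMap.proj_apply, smul_eq_mul, hv]
  try ring

lemma δvf_apply (D : ConnData) (a : Fin 4) (p : Pt) (i : Fin 8) :
    δvf D a p i = (if i = hIdx a then (1 : ℝ) else 0)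
      - ∑ c : Fin 4, (if i = vIdx c then Ncoef D c a p else 0) := by
  simp [δvf, Pi.single_apply, Finset.sum_apply]

def Dmap (D : ConnData) (a : Fin 4) (p : Pt) : Pt →L[ℝ] Pt :=
  ContinuousLinearMap.pi fun i =>
    if h : i.val < 4 then 0 else -(fderiv ℝ (Ncoef D ⟨i.val - 4, by omega⟩ a) p)

lemma Dmap_applyv (D : ConnData) (a : Fin 4) (p v : Pt) (c : Fin 4) :
    Dmap D a p v (vIdx c) = -(fderiv ℝ (Ncoef D c a) p v) := by
  have hc : ((⟨(vIdx c).val - 4, by omega⟩ : Fin 4)) = c := by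
    apply Fin.ext; simp [vIdx]
  rw [Dmap, ContinuousLinearMap.pi_apply, dif_neg (by simp [vIdx]), hc]
  rfl

lemma Dmap_applyh (D : ConnData) (a : Fin 4) (p v : Pt) (i : Fin 8) (h : i.val < 4) :
    Dmap D a p v i = 0 := by
  rw [Dmap, ContinuousLinearMap.pi_apply, dif_pos h]
  rfl

lemma hasF_δvf (D : ConnData) (a : Fin 4) (p : Pt)
    (hd : ∀ c : Fin 4, DifferentiableAt ℝ (Ncoef D c a) p) :
    HasFDerivAt (δvf D a) (Dmap D a p) p := by
  apply hasFDerivAt_pi''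
  intro i
  rw [Dmap, ContinuousLinearMap.proj_pi]
  by_cases h : i.val < 4
  · rw [dif_pos h]
    have key : (fun x : Pt => δvf D a x i) = fun _ => (if i = hIdx a then (1:ℝ) else 0) := by
      funext x
      rw [δvf_apply, Fin.sum_univ_four]
      have h0 : i ≠ vIdx 0 := by intro he; have := congrArg Fin.val he; simp [vIdx] at this; omega
      have h1 : i ≠ vIdx 1 := by intro he; have := congrArg Fin.val he; simp [vIdx] at this; omega
      have h2 : i ≠ vIdx 2 := by intro he; have := congrArg Fin.val he; simp [vIdx] at this; omega
      have h3 : i ≠ vIdx 3 := by intro he; have := congrArg Fin.val he; simp [vIdx] at this; omega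
      simp [h0, h1, h2, h3]
    rw [key]
    exact hasFDerivAt_const _ _
  · rw [dif_neg h]
    obtain ⟨c, rfl⟩ : ∃ c : Fin 4, i = vIdx c :=
      ⟨⟨i.val - 4, by omega⟩, by apply Fin.ext; simp [vIdx]; omega⟩
    have hidx : (⟨(vIdx c).val - 4, by omega⟩ : Fin 4) = c := by apply Fin.ext; simp [vIdx]
    rw [hidx]
    have key2 : (fun x : Pt => δvf D a x (vIdx c)) = fun x => -(Ncoef D c a x) := by
      funext x
      rw [δvf_apply, Fin.sum_univ_four]
      have hh : vIdx c ≠ hIdx a := by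
        intro he; simp only [vIdx, hIdx, Fin.mk.injEq] at he
        have := a.isLt; omega
      have inj : ∀ c' : Fin 4, (vIdx c = vIdx c') ↔ c = c' := by
        intro c'
        constructor
        · intro he; simp only [vIdx, Fin.mk.injEq] at he; exact Fin.ext (by omega)
        · rintro rfl; rfl
      rw [if_neg hh]
      simp only [inj]
      fin_cases c <;> norm_num [Fin.ext_iff, show ((3:Fin 4):ℕ) = 3 from rfl, show ((2:Fin 4):ℕ) = 2 from rfl] <;> try rfl
    rw [key2]
    exact ((hd c).hasFDerivAt).neg

lemma δvf_applyh (D : ConnData) (a : Fin 4) (p : Pt) (i : Fin 8) (h : i.val < 4) :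
    δvf D a p i = if i = hIdx a then (1:ℝ) else 0 := by
  rw [δvf_apply, Fin.sum_univ_four]
  have h0 : i ≠ vIdx 0 := by intro he; have := congrArg Fin.val he; simp [vIdx] at this; omega
  have h1 : i ≠ vIdx 1 := by intro he; have := congrArg Fin.val he; simp [vIdx] at this; omega
  have h2 : i ≠ vIdx 2 := by intro he; have := congrArg Fin.val he; simp [vIdx] at this; omega
  have h3 : i ≠ vIdx 3 := by intro he; have := congrArg Fin.val he; simp [vIdx] at this; omega
  simp [h0, h1, h2, h3]

lemma δvf_applyv (D : ConnData) (a : Fin 4) (p : Pt) (c : Fin 4) :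
    δvf D a p (vIdx c) = -(Ncoef D c a p) := by
  rw [δvf_apply, Fin.sum_univ_four]
  have hh : vIdx c ≠ hIdx a := by
    intro he; simp only [vIdx, hIdx, Fin.mk.injEq] at he
    have := a.isLt; omega
  have inj : ∀ c' : Fin 4, (vIdx c = vIdx c') ↔ c = c' := by
    intro c'
    constructor
    · intro he; simp only [vIdx, Fin.mk.injEq] at he; exact Fin.ext (by omega)
    · rintro rfl; rfl
  rw [if_neg hh]
  simp only [inj]
  fin_cases c <;> norm_num [Fin.ext_iff, show ((3:Fin 4):ℕ) = 3 from rfl, show ((2:Fin 4):ℕ) = 2 from rfl] <;> try rfl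

lemma rhs_apply (A B C : ℝ) (i : Fin 8) :
    (Pi.single (vIdx 0) A + Pi.single (vIdx 1) B + Pi.single (vIdx 2) C : Pt) i
      = ![0, 0, 0, 0, A, B, C, 0] i := by
  fin_cases i <;>
    simp [Pi.single_apply, vIdx0, vIdx1, vIdx2] <;> rfl

lemma vec8_h (A B C : ℝ) (i : Fin 8) (h : i.val < 4) :
    ![(0:ℝ), 0, 0, 0, A, B, C, 0] i = 0 := by
  fin_cases i <;> first | rfl | (exact absurd h (by decide))

lemma vec8_v (A B C : ℝ) (c : Fin 4) :
    ![(0:ℝ), 0, 0, 0, A, B, C, 0] (vIdx c) = ![A, B, C, (0:ℝ)] c := by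
  fin_cases c <;> rfl

/-- `[δ_t, δ_θ] = a₆θ̇∂̇_t + a₇θ̇∂̇_r + (a₈ṫ + a₉ṙ)∂̇_θ` and
`[δ_r, δ_θ] = a₁₀θ̇∂̇_t + a₁₁θ̇∂̇_r + (a₁₂ṫ + a₁₃ṙ)∂̇_θ` on the domain `sin θ ≠ 0`. -/
theorem statement_5 (D : ConnData) (hD : D.Smooth) :
    ∀ p : Pt, Real.sin (p 2) ≠ 0 →
      lie (δvf D 0) (δvf D 2) p =
        Pi.single (vIdx 0) (a6 D (p 0, p 1) * p 6)
        + Pi.single (vIdx 1) (a7 D (p 0, p 1) * p 6)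
        + Pi.single (vIdx 2) (a8 D (p 0, p 1) * p 4 + a9 D (p 0, p 1) * p 5) ∧
      lie (δvf D 1) (δvf D 2) p =
        Pi.single (vIdx 0) (a10 D (p 0, p 1) * p 6)
        + Pi.single (vIdx 1) (a11 D (p 0, p 1) * p 6)
        + Pi.single (vIdx 2) (a12 D (p 0, p 1) * p 4 + a13 D (p 0, p 1) * p 5) := by
  obtain ⟨h1, h2, h3, h4, h5, h6, h7, h8, h9, h10⟩ := hD
  intro p hp
  -- derivative of cotangent piece
  have hdiv : HasDerivAt (fun θ : ℝ => Real.cos θ / Real.sin θ)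
      ((-Real.sin (p 2) * Real.sin (p 2) - Real.cos (p 2) * Real.cos (p 2)) / Real.sin (p 2) ^ 2)
      (p 2) := (Real.hasDerivAt_cos (p 2)).div (Real.hasDerivAt_sin (p 2)) hp
  have hcot : HasFDerivAt (fun q : Pt => Real.cos (q 2) / Real.sin (q 2))
      (((-Real.sin (p 2) * Real.sin (p 2) - Real.cos (p 2) * Real.cos (p 2)) / Real.sin (p 2) ^ 2)
        • (ContinuousLinearMap.proj 2 : Pt →L[ℝ] ℝ)) p :=
    by have := hdiv.comp_hasFDerivAt p (hasF_coord 2 p); exact this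
  -- differentiability of the N coefficients
  have hd0 : ∀ c : Fin 4, DifferentiableAt ℝ (Ncoef D c 0) p := by
    intro c
    fin_cases c
    · show DifferentiableAt ℝ (Ncoef D 0 0) p
      rw [N00eq]
      exact (((hasF_k h1 p).mul (hasF_coord 4 p)).add ((hasF_k h2 p).mul (hasF_coord 5 p))).differentiableAt
    · show DifferentiableAt ℝ (Ncoef D 1 0) p
      rw [N10eq]
      exact (((hasF_k h4 p).mul (hasF_coord 4 p)).add ((hasF_k h6 p).mul (hasF_coord 5 p))).differentiableAt
    · show DifferentiableAt ℝ (Ncoef D 2 0) p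
      rw [N20eq]
      exact ((hasF_k h8 p).mul (hasF_coord 6 p)).differentiableAt
    · show DifferentiableAt ℝ (Ncoef D 3 0) p
      rw [N30eq]
      exact ((hasF_k h8 p).mul (hasF_coord 7 p)).differentiableAt
  have hd1 : ∀ c : Fin 4, DifferentiableAt ℝ (Ncoef D c 1) p := by
    intro c
    fin_cases c
    · show DifferentiableAt ℝ (Ncoef D 0 1) p
      rw [N01eq]
      exact (((hasF_k h2 p).mul (hasF_coord 4 p)).add ((hasF_k h3 p).mul (hasF_coord 5 p))).differentiableAt
    · show DifferentiableAt ℝ (Ncoef D 1 1) p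
      rw [N11eq]
      exact (((hasF_k h6 p).mul (hasF_coord 4 p)).add ((hasF_k h5 p).mul (hasF_coord 5 p))).differentiableAt
    · show DifferentiableAt ℝ (Ncoef D 2 1) p
      rw [N21eq]
      exact ((hasF_k h9 p).mul (hasF_coord 6 p)).differentiableAt
    · show DifferentiableAt ℝ (Ncoef D 3 1) p
      rw [N31eq]
      exact ((hasF_k h9 p).mul (hasF_coord 7 p)).differentiableAt
  have hd2 : ∀ c : Fin 4, DifferentiableAt ℝ (Ncoef D c 2) p := by
    intro c
    fin_cases c
    · show DifferentiableAt ℝ (Ncoef D 0 2) p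
      rw [N02eq]
      exact ((hasF_k h7 p).mul (hasF_coord 6 p)).differentiableAt
    · show DifferentiableAt ℝ (Ncoef D 1 2) p
      rw [N12eq]
      exact ((hasF_k h10 p).mul (hasF_coord 6 p)).differentiableAt
    · show DifferentiableAt ℝ (Ncoef D 2 2) p
      rw [N22eq]
      exact (((hasF_k h8 p).mul (hasF_coord 4 p)).add ((hasF_k h9 p).mul (hasF_coord 5 p))).differentiableAt
    · show DifferentiableAt ℝ (Ncoef D 3 2) p
      rw [N32eq]
      exact (hcot.mul (hasF_coord 7 p)).differentiableAt
  have w0_0 : δvf D 0 p 0 = (1:ℝ) := by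
    rw [δvf_applyh D 0 p 0 (by decide)]
    simp [hIdx0, hIdx1, hIdx2]
  have w0_1 : δvf D 0 p 1 = (0:ℝ) := by
    rw [δvf_applyh D 0 p 1 (by decide)]
    simp [hIdx0, hIdx1, hIdx2]
  have w0_2 : δvf D 0 p 2 = (0:ℝ) := by
    rw [δvf_applyh D 0 p 2 (by decide)]
    simp [hIdx0, hIdx1, hIdx2]
  have w1_0 : δvf D 1 p 0 = (0:ℝ) := by
    rw [δvf_applyh D 1 p 0 (by decide)]
    simp [hIdx0, hIdx1, hIdx2]
  have w1_1 : δvf D 1 p 1 = (1:ℝ) := by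
    rw [δvf_applyh D 1 p 1 (by decide)]
    simp [hIdx0, hIdx1, hIdx2]
  have w1_2 : δvf D 1 p 2 = (0:ℝ) := by
    rw [δvf_applyh D 1 p 2 (by decide)]
    simp [hIdx0, hIdx1, hIdx2]
  have w2_0 : δvf D 2 p 0 = (0:ℝ) := by
    rw [δvf_applyh D 2 p 0 (by decide)]
    simp [hIdx0, hIdx1, hIdx2]
  have w2_1 : δvf D 2 p 1 = (0:ℝ) := by
    rw [δvf_applyh D 2 p 1 (by decide)]
    simp [hIdx0, hIdx1, hIdx2]
  have w0_4 : δvf D 0 p 4 = -(D.k1 (p 0, p 1) * p 4 + D.k2 (p 0, p 1) * p 5) := by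
    have h := δvf_applyv D 0 p 0
    rw [vIdx0] at h
    rw [h, N00eq]
  have w0_5 : δvf D 0 p 5 = -(D.k4 (p 0, p 1) * p 4 + D.k6 (p 0, p 1) * p 5) := by
    have h := δvf_applyv D 0 p 1
    rw [vIdx1] at h
    rw [h, N10eq]
  have w0_6 : δvf D 0 p 6 = -(D.k8 (p 0, p 1) * p 6) := by
    have h := δvf_applyv D 0 p 2
    rw [vIdx2] at h
    rw [h, N20eq]
  have w0_7 : δvf D 0 p 7 = -(D.k8 (p 0, p 1) * p 7) := by
    have h := δvf_applyv D 0 p 3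
    rw [vIdx3] at h
    rw [h, N30eq]
  have w1_4 : δvf D 1 p 4 = -(D.k2 (p 0, p 1) * p 4 + D.k3 (p 0, p 1) * p 5) := by
    have h := δvf_applyv D 1 p 0
    rw [vIdx0] at h
    rw [h, N01eq]
  have w1_5 : δvf D 1 p 5 = -(D.k6 (p 0, p 1) * p 4 + D.k5 (p 0, p 1) * p 5) := by
    have h := δvf_applyv D 1 p 1
    rw [vIdx1] at h
    rw [h, N11eq]
  have w1_6 : δvf D 1 p 6 = -(D.k9 (p 0, p 1) * p 6) := by
    have h := δvf_applyv D 1 p 2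
    rw [vIdx2] at h
    rw [h, N21eq]
  have w1_7 : δvf D 1 p 7 = -(D.k9 (p 0, p 1) * p 7) := by
    have h := δvf_applyv D 1 p 3
    rw [vIdx3] at h
    rw [h, N31eq]
  have w2_4 : δvf D 2 p 4 = -(D.k7 (p 0, p 1) * p 6) := by
    have h := δvf_applyv D 2 p 0
    rw [vIdx0] at h
    rw [h, N02eq]
  have w2_5 : δvf D 2 p 5 = -(D.k10 (p 0, p 1) * p 6) := by
    have h := δvf_applyv D 2 p 1
    rw [vIdx1] at h
    rw [h, N12eq]
  have w2_6 : δvf D 2 p 6 = -(D.k8 (p 0, p 1) * p 4 + D.k9 (p 0, p 1) * p 5) := by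
    have h := δvf_applyv D 2 p 2
    rw [vIdx2] at h
    rw [h, N22eq]
  have w2_7 : δvf D 2 p 7 = -(Real.cos (p 2) / Real.sin (p 2) * p 7) := by
    have h := δvf_applyv D 2 p 3
    rw [vIdx3] at h
    rw [h, N32eq]
  have f02W0 : fderiv ℝ (Ncoef D 0 2) p (δvf D 0 p) = pdt D.k7 (p 0, p 1) * p 6 + D.k7 (p 0, p 1) * -(D.k8 (p 0, p 1) * p 6) := by
    rw [N02eq]
    rw [fd_k_mul h7, w0_0, w0_1, w0_6]
    ring
  have f12W0 : fderiv ℝ (Ncoef D 1 2) p (δvf D 0 p) = pdt D.k10 (p 0, p 1) * p 6 + D.k10 (p 0, p 1) * -(D.k8 (p 0, p 1) * p 6) := by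
    rw [N12eq]
    rw [fd_k_mul h10, w0_0, w0_1, w0_6]
    ring
  have f22W0 : fderiv ℝ (Ncoef D 2 2) p (δvf D 0 p) = pdt D.k8 (p 0, p 1) * p 4 + D.k8 (p 0, p 1) * -(D.k1 (p 0, p 1) * p 4 + D.k2 (p 0, p 1) * p 5) + (pdt D.k9 (p 0, p 1) * p 5 + D.k9 (p 0, p 1) * -(D.k4 (p 0, p 1) * p 4 + D.k6 (p 0, p 1) * p 5)) := by
    rw [N22eq]
    rw [fd_k_mul2 h8 h9, w0_0, w0_1, w0_4, w0_5]
    ring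
  have f32W0 : fderiv ℝ (Ncoef D 3 2) p (δvf D 0 p) = Real.cos (p 2) / Real.sin (p 2) * -(D.k8 (p 0, p 1) * p 7) := by
    rw [N32eq]
    rw [fd_cot p (δvf D 0 p) hp w0_2, w0_7]
  have f02W1 : fderiv ℝ (Ncoef D 0 2) p (δvf D 1 p) = pdr D.k7 (p 0, p 1) * p 6 + D.k7 (p 0, p 1) * -(D.k9 (p 0, p 1) * p 6) := by
    rw [N02eq]
    rw [fd_k_mul h7, w1_0, w1_1, w1_6]
    ring
  have f12W1 : fderiv ℝ (Ncoef D 1 2) p (δvf D 1 p) = pdr D.k10 (p 0, p 1) * p 6 + D.k10 (p 0, p 1) * -(D.k9 (p 0, p 1) * p 6) := by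
    rw [N12eq]
    rw [fd_k_mul h10, w1_0, w1_1, w1_6]
    ring
  have f22W1 : fderiv ℝ (Ncoef D 2 2) p (δvf D 1 p) = pdr D.k8 (p 0, p 1) * p 4 + D.k8 (p 0, p 1) * -(D.k2 (p 0, p 1) * p 4 + D.k3 (p 0, p 1) * p 5) + (pdr D.k9 (p 0, p 1) * p 5 + D.k9 (p 0, p 1) * -(D.k6 (p 0, p 1) * p 4 + D.k5 (p 0, p 1) * p 5)) := by
    rw [N22eq]
    rw [fd_k_mul2 h8 h9, w1_0, w1_1, w1_4, w1_5]
    ring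
  have f32W1 : fderiv ℝ (Ncoef D 3 2) p (δvf D 1 p) = Real.cos (p 2) / Real.sin (p 2) * -(D.k9 (p 0, p 1) * p 7) := by
    rw [N32eq]
    rw [fd_cot p (δvf D 1 p) hp w1_2, w1_7]
  have f00W2 : fderiv ℝ (Ncoef D 0 0) p (δvf D 2 p) = D.k1 (p 0, p 1) * -(D.k7 (p 0, p 1) * p 6) + D.k2 (p 0, p 1) * -(D.k10 (p 0, p 1) * p 6) := by
    rw [N00eq]
    rw [fd_k_mul2 h1 h2, w2_0, w2_1, w2_4, w2_5]
    ring
  have f10W2 : fderiv ℝ (Ncoef D 1 0) p (δvf D 2 p) = D.k4 (p 0, p 1) * -(D.k7 (p 0, p 1) * p 6) + D.k6 (p 0, p 1) * -(D.k10 (p 0, p 1) * p 6) := by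
    rw [N10eq]
    rw [fd_k_mul2 h4 h6, w2_0, w2_1, w2_4, w2_5]
    ring
  have f20W2 : fderiv ℝ (Ncoef D 2 0) p (δvf D 2 p) = D.k8 (p 0, p 1) * -(D.k8 (p 0, p 1) * p 4 + D.k9 (p 0, p 1) * p 5) := by
    rw [N20eq]
    rw [fd_k_mul h8, w2_0, w2_1, w2_6]
    ring
  have f30W2 : fderiv ℝ (Ncoef D 3 0) p (δvf D 2 p) = D.k8 (p 0, p 1) * -(Real.cos (p 2) / Real.sin (p 2) * p 7) := by
    rw [N30eq]
    rw [fd_k_mul h8, w2_0, w2_1, w2_7]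
    ring
  have f01W2 : fderiv ℝ (Ncoef D 0 1) p (δvf D 2 p) = D.k2 (p 0, p 1) * -(D.k7 (p 0, p 1) * p 6) + D.k3 (p 0, p 1) * -(D.k10 (p 0, p 1) * p 6) := by
    rw [N01eq]
    rw [fd_k_mul2 h2 h3, w2_0, w2_1, w2_4, w2_5]
    ring
  have f11W2 : fderiv ℝ (Ncoef D 1 1) p (δvf D 2 p) = D.k6 (p 0, p 1) * -(D.k7 (p 0, p 1) * p 6) + D.k5 (p 0, p 1) * -(D.k10 (p 0, p 1) * p 6) := by
    rw [N11eq]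
    rw [fd_k_mul2 h6 h5, w2_0, w2_1, w2_4, w2_5]
    ring
  have f21W2 : fderiv ℝ (Ncoef D 2 1) p (δvf D 2 p) = D.k9 (p 0, p 1) * -(D.k8 (p 0, p 1) * p 4 + D.k9 (p 0, p 1) * p 5) := by
    rw [N21eq]
    rw [fd_k_mul h9, w2_0, w2_1, w2_6]
    ring
  have f31W2 : fderiv ℝ (Ncoef D 3 1) p (δvf D 2 p) = D.k9 (p 0, p 1) * -(Real.cos (p 2) / Real.sin (p 2) * p 7) := by
    rw [N31eq]
    rw [fd_k_mul h9, w2_0, w2_1, w2_7]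
    ring
  have hF0 := hasF_δvf D 0 p hd0
  have hF1 := hasF_δvf D 1 p hd1
  have hF2 := hasF_δvf D 2 p hd2
  constructor
  · have e1 : lie (δvf D 0) (δvf D 2) p
        = Dmap D 2 p (δvf D 0 p) - Dmap D 0 p (δvf D 2 p) := by
      unfold lie
      rw [hF2.fderiv, hF0.fderiv]
    rw [e1]
    funext i
    rw [Pi.sub_apply, rhs_apply]
    by_cases h : i.val < 4
    · rw [Dmap_applyh _ _ _ _ _ h, Dmap_applyh _ _ _ _ _ h, vec8_h _ _ _ _ h, sub_zero]
    · obtain ⟨c, rfl⟩ : ∃ c : Fin 4, i = vIdx c :=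
        ⟨⟨i.val - 4, by omega⟩, by apply Fin.ext; simp [vIdx]; omega⟩
      rw [Dmap_applyv, Dmap_applyv, vec8_v]
      fin_cases c
      · show -(fderiv ℝ (Ncoef D 0 2) p (δvf D 0 p)) - -(fderiv ℝ (Ncoef D 0 0) p (δvf D 2 p))
            = a6 D (p 0, p 1) * p 6
        rw [f02W0, f00W2]
        simp only [a6]
        ring
      · show -(fderiv ℝ (Ncoef D 1 2) p (δvf D 0 p)) - -(fderiv ℝ (Ncoef D 1 0) p (δvf D 2 p))
            = a7 D (p 0, p 1) * p 6
        rw [f12W0, f10W2]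
        simp only [a7]
        ring
      · show -(fderiv ℝ (Ncoef D 2 2) p (δvf D 0 p)) - -(fderiv ℝ (Ncoef D 2 0) p (δvf D 2 p))
            = a8 D (p 0, p 1) * p 4 + a9 D (p 0, p 1) * p 5
        rw [f22W0, f20W2]
        simp only [a8, a9]
        ring
      · show -(fderiv ℝ (Ncoef D 3 2) p (δvf D 0 p)) - -(fderiv ℝ (Ncoef D 3 0) p (δvf D 2 p))
            = 0
        rw [f32W0, f30W2]
        ring
  · have e2 : lie (δvf D 1) (δvf D 2) p
        = Dmap D 2 p (δvf D 1 p) - Dmap D 1 p (δvf D 2 p) := by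
      unfold lie
      rw [hF2.fderiv, hF1.fderiv]
    rw [e2]
    funext i
    rw [Pi.sub_apply, rhs_apply]
    by_cases h : i.val < 4
    · rw [Dmap_applyh _ _ _ _ _ h, Dmap_applyh _ _ _ _ _ h, vec8_h _ _ _ _ h, sub_zero]
    · obtain ⟨c, rfl⟩ : ∃ c : Fin 4, i = vIdx c :=
        ⟨⟨i.val - 4, by omega⟩, by apply Fin.ext; simp [vIdx]; omega⟩
      rw [Dmap_applyv, Dmap_applyv, vec8_v]
      fin_cases c
      · show -(fderiv ℝ (Ncoef D 0 2) p (δvf D 1 p)) - -(fderiv ℝ (Ncoef D 0 1) p (δvf D 2 p))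
            = a10 D (p 0, p 1) * p 6
        rw [f02W1, f01W2]
        simp only [a10]
        ring
      · show -(fderiv ℝ (Ncoef D 1 2) p (δvf D 1 p)) - -(fderiv ℝ (Ncoef D 1 1) p (δvf D 2 p))
            = a11 D (p 0, p 1) * p 6
        rw [f12W1, f11W2]
        simp only [a11]
        ring
      · show -(fderiv ℝ (Ncoef D 2 2) p (δvf D 1 p)) - -(fderiv ℝ (Ncoef D 2 1) p (δvf D 2 p))
            = a12 D (p 0, p 1) * p 4 + a13 D (p 0, p 1) * p 5
        rw [f22W1, f21W2]
        simp only [a12, a13]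
        ring
      · show -(fderiv ℝ (Ncoef D 3 2) p (δvf D 1 p)) - -(fderiv ℝ (Ncoef D 3 1) p (δvf D 2 p))
            = 0
        rw [f32W1, f31W2]
        ring

end
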